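/- Let X be a finite topological space satisfying the T₀ separation axiom, and let U be a basis-like open cover of X, regarded as a finite poset under set inclusion and equipped with the topology whose open sets are the down-sets of this poset. Suppose there exists an order-preserving map q : U → B(X) such that U ⊆ q(U) for every U ∈ U. Then the space U is homotopy equivalent to the space B(X) (equivalently, to X). -/

import Mathlib

/-- `minNhd x` is the intersection of all open sets containing `x`. -/
def minNhd {X : Type*} [TopologicalSpace X] (x : X) : Set X :=
  ⋂₀ {U : Set X | IsOpen U ∧ x ∈ U}

/-- `𝒰` is a basis-like open cover: an open cover such that whenever `x ∈ u ∩ v` with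
`u, v ∈ 𝒰` there is `w ∈ 𝒰` with `x ∈ w ⊆ u ∩ v`. -/
def IsBasisLikeCover {X : Type*} [TopologicalSpace X] (𝒰 : Set (Set X)) : Prop :=
  (∀ u ∈ 𝒰, IsOpen u) ∧ ⋃₀ 𝒰 = Set.univ ∧
    ∀ u ∈ 𝒰, ∀ v ∈ 𝒰, ∀ x ∈ u ∩ v, ∃ w ∈ 𝒰, x ∈ w ∧ w ⊆ u ∩ v

/-- The Alexandrov topology on a poset whose open sets are exactly the lower sets
(down-sets). -/
def lowerSetTopology (α : Type*) [Preorder α] : TopologicalSpace α where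
  IsOpen s := IsLowerSet s
  isOpen_univ := isLowerSet_univ
  isOpen_inter := fun _ _ hs ht => hs.inter ht
  isOpen_sUnion := fun _ hS => isLowerSet_sUnion hS

section Aux

lemma mem_minNhd_self {X : Type*} [TopologicalSpace X] (x : X) : x ∈ minNhd x := by
  intro U hU; exact hU.2

lemma minNhd_subset {X : Type*} [TopologicalSpace X] {x : X} {U : Set X}
    (hU : IsOpen U) (hx : x ∈ U) : minNhd x ⊆ U :=
  Set.sInter_subset_of_mem ⟨hU, hx⟩

lemma isOpen_minNhd {X : Type*} [TopologicalSpace X] [Finite X] (x : X) :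
    IsOpen (minNhd x) := by
  have hfin : {U : Set X | IsOpen U ∧ x ∈ U}.Finite := Set.toFinite _
  exact Set.Finite.isOpen_sInter hfin (fun U hU => hU.1)

lemma minNhd_mono {X : Type*} [TopologicalSpace X] [Finite X] {x y : X}
    (h : y ∈ minNhd x) : minNhd y ⊆ minNhd x :=
  minNhd_subset (isOpen_minNhd x) h

/-- If `f a` specializes to `g a` for every `a` (i.e. every open set containing `g a`
contains `f a`), then `f` and `g` are homotopic. -/
lemma homotopic_of_forall_open {A B : Type*} [TopologicalSpace A] [TopologicalSpace B]
    (f g : C(A, B)) (h : ∀ a, ∀ V : Set B, IsOpen V → g a ∈ V → f a ∈ V) :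
    f.Homotopic g := by
  refine ⟨⟨⟨fun p => if (p.1 : ℝ) < 1 then f p.2 else g p.2, ?_⟩, ?_, ?_⟩⟩
  · rw [continuous_def]
    intro V hV
    have hset : (fun p : unitInterval × A => if (p.1 : ℝ) < 1 then f p.2 else g p.2) ⁻¹' V
        = ({t : unitInterval | (t : ℝ) < 1} ×ˢ (f ⁻¹' V)) ∪ (Set.univ ×ˢ (g ⁻¹' V)) := by
      ext ⟨t, a⟩
      by_cases ht : (t : ℝ) < 1
      · simp only [Set.mem_preimage, if_pos ht, Set.mem_union, Set.mem_prod, Set.mem_setOf_eq,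
          Set.mem_univ, true_and]
        constructor
        · intro hfa; exact Or.inl ⟨ht, hfa⟩
        · rintro (⟨_, hfa⟩ | hga)
          · exact hfa
          · exact h a V hV hga
      · simp only [Set.mem_preimage, if_neg ht, Set.mem_union, Set.mem_prod, Set.mem_setOf_eq,
          Set.mem_univ, true_and]
        constructor
        · intro hga; exact Or.inr hga
        · rintro (⟨ht', _⟩ | hga)
          · exact absurd ht' ht
          · exact hga
    rw [hset]
    refine IsOpen.union (IsOpen.prod ?_ (hV.preimage f.continuous))
      (isOpen_univ.prod (hV.preimage g.continuous))
    exact isOpen_induced_iff.mpr ⟨Set.Iio 1, isOpen_Iio, rfl⟩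
  · intro x
    simp
  · intro x
    simp

end Aux

/-- Let `X` be a finite T₀ space and `𝒰` a basis-like open cover of `X`, regarded as
a finite poset under inclusion with the down-set topology. If there is an
order-preserving map `q : 𝒰 → B(X)` (here encoded as `q : 𝒰 → X` via the order
isomorphism `B(X) ≅ X`, so `q u` corresponds to the member `minNhd (q u)` of `B(X)`)
such that `u ⊆ minNhd (q u)` for every `u ∈ 𝒰`, then the space `𝒰` is homotopy
equivalent to `B(X)`, equivalently, to `X`. -/
theorem homotopyEquiv_of_map_to_basis (X : Type*) [TopologicalSpace X] [Finite X]
    [T0Space X] (𝒰 : Set (Set X)) (h𝒰 : IsBasisLikeCover 𝒰)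
    (q : ↥𝒰 → X)
    (hq_mono : ∀ u v : ↥𝒰, (u : Set X) ⊆ (v : Set X) → minNhd (q u) ⊆ minNhd (q v))
    (hq_incl : ∀ u : ↥𝒰, (u : Set X) ⊆ minNhd (q u)) :
    Nonempty (@ContinuousMap.HomotopyEquiv ↥𝒰 X (lowerSetTopology ↥𝒰)
      inferInstance) := by
  letI : TopologicalSpace ↥𝒰 := lowerSetTopology ↥𝒰
  obtain ⟨hopen, hcover, hbasis⟩ := h𝒰
  -- Every point has a least member of 𝒰 containing it.
  have hmin : ∀ x : X, ∃ m : ↥𝒰, x ∈ (m : Set X) ∧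
      ∀ u : ↥𝒰, x ∈ (u : Set X) → (m : Set X) ⊆ (u : Set X) := by
    intro x
    have hS : {u : Set X | u ∈ 𝒰 ∧ x ∈ u}.Finite := Set.toFinite _
    have hSne : {u : Set X | u ∈ 𝒰 ∧ x ∈ u}.Nonempty := by
      have : x ∈ ⋃₀ 𝒰 := by rw [hcover]; trivial
      obtain ⟨u, hu, hxu⟩ := this
      exact ⟨u, hu, hxu⟩
    obtain ⟨m, hm, hmmin⟩ := Set.Finite.exists_minimalFor id _ hS hSne
    refine ⟨⟨m, hm.1⟩, hm.2, ?_⟩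
    intro u hxu
    obtain ⟨w, hw, hxw, hwsub⟩ := hbasis m hm.1 u u.2 x ⟨hm.2, hxu⟩
    have hwm : w = m := Set.Subset.antisymm (hwsub.trans Set.inter_subset_left)
        (hmmin (j := w) ⟨hw, hxw⟩ (hwsub.trans Set.inter_subset_left))
    exact hwm ▸ hwsub.trans Set.inter_subset_right
  choose w hw_mem hw_min using hmin
  -- The comparison map `f : 𝒰 → X` and its homotopy inverse `g : X → 𝒰`.
  have hf_cont : Continuous q := by
    rw [continuous_def]
    intro V hV
    -- preimage is a lower set
    show IsLowerSet (q ⁻¹' V)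
    intro u v hvu hu
    exact minNhd_subset hV hu (hq_mono v u hvu (mem_minNhd_self (q v)))
  have hg_mono : ∀ x y : X, y ∈ minNhd x → ((w y : Set X)) ⊆ (w x : Set X) := by
    intro x y hy
    have hyx : y ∈ (w x : Set X) :=
      minNhd_subset (hopen _ (w x).2) (hw_mem x) hy
    exact hw_min y (w x) hyx
  have hg_cont : Continuous w := by
    rw [continuous_def]
    intro L hL
    -- hL : IsLowerSet L
    have hLl : IsLowerSet L := hL
    have : w ⁻¹' L = ⋃ x ∈ w ⁻¹' L, minNhd x := by
      apply Set.Subset.antisymm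
      · intro x hx
        exact Set.mem_biUnion hx (mem_minNhd_self x)
      · intro y hy
        obtain ⟨x, hx, hyx⟩ := Set.mem_iUnion₂.mp hy
        have : (w y : Set X) ⊆ (w x : Set X) := hg_mono x y hyx
        exact hLl this hx
    rw [this]
    exact isOpen_biUnion (fun x _ => isOpen_minNhd x)
  let f : C(↥𝒰, X) := ⟨q, hf_cont⟩
  let g : C(X, ↥𝒰) := ⟨w, hg_cont⟩
  refine ⟨⟨f, g, ?_, ?_⟩⟩
  · -- g ∘ f homotopic to id on 𝒰
    refine (homotopic_of_forall_open (ContinuousMap.id ↥𝒰) (g.comp f) ?_).symm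
    intro u L hL hu
    -- hL : IsLowerSet L, hu : (g ∘ f) u ∈ L; need u ∈ L
    have hLl : IsLowerSet L := hL
    have hsub : (u : Set X) ⊆ (w (q u) : Set X) :=
      (hq_incl u).trans (minNhd_subset (hopen _ (w (q u)).2) (hw_mem (q u)))
    exact hLl hsub hu
  · -- f ∘ g homotopic to id on X
    refine (homotopic_of_forall_open (ContinuousMap.id X) (f.comp g) ?_).symm
    intro x V hV hx
    -- hx : q (w x) ∈ V; need x ∈ V
    have hxq : x ∈ minNhd (q (w x)) := hq_incl (w x) (hw_mem x)
    exact minNhd_subset hV hx hxq
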